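/- arXiv:2510.09196 — 3 statements merged into one kernel-verified Lean document; each statement's English description precedes it below -/
import Mathlib

section
/- Let μ be the uniform probability measure on S^{d−1} ⊆ ℝ^d, let p ∈ (0,1/2], and let A ⊆ S^{d−1} be a measurable geodesically convex subset with x ∈ A. Then μ(A ∩ C_x^p) ≥ p · μ(A), where C_x^p = {w ∈ S^{d−1} : ⟨w, x⟩ ≥ t_{p,d}} is the spherical cap of measure p centered at x. -/
open MeasureTheory ProbabilityTheory Real
open scoped RealInnerProductSpace ENNReal NNReal

noncomputable section

/-- The standard Gaussian measure `N(0, I_d)` on `ℝ^d`. -/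
def stdGaussian (d : ℕ) : Measure (EuclideanSpace ℝ (Fin d)) :=
  (Measure.pi fun _ : Fin d => gaussianReal 0 1).map
    (MeasurableEquiv.toLp 2 (Fin d → ℝ))

/-- The uniform probability measure on the unit sphere `S^{d-1} ⊆ ℝ^d`,
viewed as a measure on the ambient space (normalized spherical surface measure). -/
def sphereUniform (d : ℕ) : Measure (EuclideanSpace ℝ (Fin d)) :=
  (((volume : Measure (EuclideanSpace ℝ (Fin d))).toSphere Set.univ)⁻¹) •
    ((volume : Measure (EuclideanSpace ℝ (Fin d))).toSphere).map (Subtype.val)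

/-- `t` is the threshold `t_{p,d}`: the probability that the inner product of two
independent uniform points on the sphere is at least `t` equals `p`. -/
def IsSphereThreshold (d : ℕ) (p t : ℝ) : Prop :=
  ((sphereUniform d).prod (sphereUniform d)) {xy | t ≤ ⟪xy.1, xy.2⟫} = ENNReal.ofReal p

/-- `τ` is the threshold `τ_{p,d}`: the probability that the inner product of two
independent standard Gaussian vectors is at least `τ` equals `p`. -/
def IsGaussThreshold (d : ℕ) (p τ : ℝ) : Prop :=
  ((stdGaussian d).prod (stdGaussian d)) {xy | τ ≤ ⟪xy.1, xy.2⟫} = ENNReal.ofReal p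

/-- The clique event: all pairwise inner products are at least the threshold `t`. -/
def cliqueSet (n d : ℕ) (t : ℝ) : Set (Fin n → EuclideanSpace ℝ (Fin d)) :=
  {X | ∀ i j : Fin n, i < j → t ≤ ⟪X i, X j⟫}

/-- The number of edges of the geometric graph: pairs `i < j` with `⟪X i, X j⟫ ≥ t`. -/
def edgeCount (n d : ℕ) (t : ℝ) (X : Fin n → EuclideanSpace ℝ (Fin d)) : ℕ :=
  Nat.card {ij : Fin n × Fin n // ij.1 < ij.2 ∧ t ≤ ⟪X ij.1, X ij.2⟫}

/-- A subset of the unit sphere is geodesically convex if for any two non-antipodal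
points of it, the minimizing geodesic segment joining them (i.e. the radial projection
of the Euclidean segment) is contained in it. -/
def GeodesicConvex (d : ℕ) (A : Set (EuclideanSpace ℝ (Fin d))) : Prop :=
  ∀ x ∈ A, ∀ y ∈ A, x ≠ -y → ∀ z ∈ segment ℝ x y, ‖z‖⁻¹ • z ∈ A

/-!
Pass from the sphere to the unit ball: `sphereUniform d S` is proportional to the volume of the
cone `Ioo 0 1 • S`. Write the ball in cylindrical coordinates about the axis `ℝ x`: a height `a`,
a distance `r > 0` from the axis and a direction `u` on the unit sphere of `(ℝ ∙ x)ᗮ`, in which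
Lebesgue measure becomes `σ(du) ⊗ da ⊗ r ^ (d - 2) dr`. For fixed `u`, the `(a, r)` half-plane
is the cone over the great half-circle from `x` through `u`, and the cap becomes the angular
sector `t ≤ a / √(a² + r²)` of the half-disk, independent of `u`. Since `A` is geodesically convex
and contains `x`, the slice of `A` over `u` is an angular sector starting at `x`, so it either
lies inside the cap sector (and `p ≤ 1` suffices) or contains it (and the cap sector already
carries at least a proportion `p` of the whole half-disk). Integrating over `u` concludes.
-/

open Set Metric Module
open scoped Pointwise

theorem mul_le_mul_of_sq_add_sq_eq_one {α β α' β' : ℝ} (hβ : 0 < β) (hβ' : 0 < β')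
    (h : α ^ 2 + β ^ 2 = 1) (h' : α' ^ 2 + β' ^ 2 = 1) (hle : α ≤ α') : α * β' ≤ β * α' := by
  rcases le_or_gt α 0 with hα | hα
  · rcases le_or_gt α' 0 with hα' | hα'
    · have : β ≤ β' := by nlinarith
      nlinarith
    · nlinarith [mul_pos hβ hα']
  · have : β' ≤ β := by nlinarith
    nlinarith

theorem norm_inv_smul_smul_of_pos {E : Type*} [NormedAddCommGroup E] [NormedSpace ℝ E] {c : ℝ}
    (hc : 0 < c) (v : E) : ‖c • v‖⁻¹ • (c • v) = ‖v‖⁻¹ • v := by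
  rw [norm_smul, Real.norm_of_nonneg hc.le, smul_smul, mul_inv, mul_right_comm,
    inv_mul_cancel₀ hc.ne', one_mul]

section Orthonormal
variable {E : Type*} [NormedAddCommGroup E] [InnerProductSpace ℝ E] {x v : E}

theorem norm_smul_add_smul_of_orthonormal (hx : ‖x‖ = 1) (hv : ‖v‖ = 1) (hxv : ⟪x, v⟫ = 0)
    (a b : ℝ) : ‖a • x + b • v‖ = √(a ^ 2 + b ^ 2) := by
  rw [← Real.sqrt_sq (norm_nonneg _), norm_add_sq_real, norm_smul, norm_smul,
    real_inner_smul_left, real_inner_smul_right, hxv, hx, hv]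
  simp

theorem inner_smul_add_smul_left_of_orthonormal (hx : ‖x‖ = 1) (hxv : ⟪x, v⟫ = 0) (a b : ℝ) :
    ⟪a • x + b • v, x⟫ = a := by
  rw [inner_add_left, real_inner_smul_left, real_inner_smul_left, real_inner_self_eq_norm_sq,
    real_inner_comm, hxv, hx]
  ring

end Orthonormal

namespace GeodesicConvex
variable {d : ℕ} {A : Set (EuclideanSpace ℝ (Fin d))}

theorem norm_inv_smul_mem (hA : GeodesicConvex d A) {x y : EuclideanSpace ℝ (Fin d)}
    (hx : x ∈ A) (hy : y ∈ A) (hxy : x ≠ -y) {a b : ℝ} (ha : 0 ≤ a) (hb : 0 ≤ b)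
    (hab : 0 < a + b) : ‖a • x + b • y‖⁻¹ • (a • x + b • y) ∈ A := by
  have hseg : (a + b)⁻¹ • (a • x + b • y) ∈ segment ℝ x y :=
    ⟨a / (a + b), b / (a + b), by positivity, by positivity, by field_simp,
      by simp only [smul_add, smul_smul, div_eq_inv_mul]⟩
  have := hA x hx y hy hxy _ hseg
  rwa [norm_inv_smul_smul_of_pos (inv_pos.2 hab)] at this

theorem smul_add_smul_mem_of_le (hA : GeodesicConvex d A) {x v : EuclideanSpace ℝ (Fin d)}
    (hx : x ∈ A) (hx1 : ‖x‖ = 1) (hv : ‖v‖ = 1) (hxv : ⟪x, v⟫ = 0) {α β α' β' : ℝ}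
    (hβ : 0 < β) (hβ' : 0 < β') (h : α ^ 2 + β ^ 2 = 1) (h' : α' ^ 2 + β' ^ 2 = 1)
    (hle : α ≤ α') (hw : α • x + β • v ∈ A) : α' • x + β' • v ∈ A := by
  have hxw : x ≠ -(α • x + β • v) := by
    intro hxw
    have := congrArg (⟪·, v⟫) hxw
    simp [inner_add_left, real_inner_smul_left, hxv, hv] at this
    linarith
  -- since `α ≤ α'`, the point `α' x + β' v` lies in the cone spanned by `x` and `α x + β v`
  have hcomb : ((β * α' - α * β') / β) • x + (β' / β) • (α • x + β • v) = α' • x + β' • v := by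
    rw [smul_add, smul_smul, smul_smul, ← add_assoc, ← add_smul]
    congr 2
    · field_simp
      ring
    · field_simp
  have hc : 0 ≤ (β * α' - α * β') / β :=
    div_nonneg (sub_nonneg.2 (mul_le_mul_of_sq_add_sq_eq_one hβ hβ' h h' hle)) hβ.le
  have hunit : ‖α' • x + β' • v‖ = 1 := by
    rw [norm_smul_add_smul_of_orthonormal hx1 hv hxv, h', Real.sqrt_one]
  have := hA.norm_inv_smul_mem hx hw hxw hc (div_pos hβ' hβ).le
    (add_pos_of_nonneg_of_pos hc (div_pos hβ' hβ))
  rwa [hcomb, hunit, inv_one, one_smul] at this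

end GeodesicConvex

section Fiberwise
variable {α β : Type*} [MeasurableSpace α] [MeasurableSpace β]

theorem mul_measure_le_measure_inter_of_upwardClosed {κ : Measure β} {B S : Set β} {f : β → ℝ}
    {t : ℝ} {c : ℝ≥0∞} (hc : c ≤ 1) (hSB : S ⊆ B)
    (hS : ∀ q ∈ S, ∀ q' ∈ B, f q ≤ f q' → q' ∈ S)
    (hB : c * κ B ≤ κ (B ∩ {q | t ≤ f q})) : c * κ S ≤ κ (S ∩ {q | t ≤ f q}) := by
  by_cases hSt : S ⊆ {q | t ≤ f q}
  · rw [inter_eq_left.2 hSt]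
    exact mul_le_of_le_one_left zero_le hc
  · obtain ⟨q₀, hq₀S, hq₀t⟩ := not_subset.1 hSt
    have hBS : B ∩ {q | t ≤ f q} ⊆ S := fun q hq =>
      hS q₀ hq₀S q hq.1 ((not_le.1 hq₀t).le.trans hq.2)
    calc c * κ S ≤ c * κ B := by gcongr
      _ ≤ κ (B ∩ {q | t ≤ f q}) := hB
      _ = κ (S ∩ {q | t ≤ f q}) := congrArg κ <|
        (subset_inter hBS inter_subset_right).antisymm (inter_subset_inter_left _ hSB)

theorem mul_prod_le_prod_inter_of_forall_fiber {σ : Measure α} {κ : Measure β} [SFinite κ]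
    {T : Set (α × β)} {C : Set β} (hT : MeasurableSet T) (hC : MeasurableSet C) {c : ℝ≥0∞}
    (h : ∀ u, c * κ (Prod.mk u ⁻¹' T) ≤ κ (Prod.mk u ⁻¹' T ∩ C)) :
    c * σ.prod κ T ≤ σ.prod κ (T ∩ univ ×ˢ C) := by
  rw [Measure.prod_apply hT, Measure.prod_apply (hT.inter (MeasurableSet.univ.prod hC)),
    ← lintegral_const_mul _ (measurable_measure_prodMk_left hT)]
  refine lintegral_mono fun u => ?_
  simpa only [preimage_inter, mk_preimage_prod_right (mem_univ u)] using h u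

theorem measurePreserving_prodLeftComm {γ : Type*} [MeasurableSpace γ] (μ : Measure α)
    (ν : Measure β) (ξ : Measure γ) [SFinite μ] [SFinite ν] [SFinite ξ] :
    MeasurePreserving (fun w : α × β × γ => (w.2.1, w.1, w.2.2))
      (μ.prod (ν.prod ξ)) (ν.prod (μ.prod ξ)) :=
  (measurePreserving_prodAssoc ν μ ξ).comp <|
    (Measure.measurePreserving_swap.prod (MeasurePreserving.id ξ)).comp <|
      (measurePreserving_prodAssoc μ ν ξ).symm MeasurableEquiv.prodAssoc

end Fiberwise

section Cones
variable {F : Type*} [NormedAddCommGroup F] [NormedSpace ℝ F] {S : Set F}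

theorem mem_Ioo_smul_inter_sphere_iff {z : F} :
    z ∈ Ioo (0 : ℝ) 1 • (S ∩ sphere 0 1) ↔ z ≠ 0 ∧ ‖z‖ < 1 ∧ ‖z‖⁻¹ • z ∈ S := by
  constructor
  · rintro ⟨c, ⟨hc0, hc1⟩, s, ⟨hsS, hs⟩, rfl⟩
    rw [mem_sphere_zero_iff_norm] at hs
    refine ⟨smul_ne_zero hc0.ne' (norm_ne_zero_iff.1 (by rw [hs]; exact one_ne_zero)), ?_, ?_⟩
    · rwa [norm_smul, hs, mul_one, Real.norm_of_nonneg hc0.le]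
    · rwa [norm_inv_smul_smul_of_pos hc0, hs, inv_one, one_smul]
  · rintro ⟨hz, hz1, hzS⟩
    refine ⟨‖z‖, ⟨norm_pos_iff.2 hz, hz1⟩, ‖z‖⁻¹ • z, ⟨hzS, ?_⟩, ?_⟩
    · rw [mem_sphere_zero_iff_norm, norm_smul, norm_inv, norm_norm,
        inv_mul_cancel₀ (norm_ne_zero_iff.2 hz)]
    · exact smul_inv_smul₀ (norm_ne_zero_iff.2 hz) z

theorem MeasurableSet.Ioo_smul_inter_sphere [MeasurableSpace F] [BorelSpace F]
    (hS : MeasurableSet S) : MeasurableSet (Ioo (0 : ℝ) 1 • (S ∩ sphere 0 1)) := by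
  have : Ioo (0 : ℝ) 1 • (S ∩ sphere 0 1) = {z | z ≠ 0 ∧ ‖z‖ < 1 ∧ ‖z‖⁻¹ • z ∈ S} := by
    ext z
    exact mem_Ioo_smul_inter_sphere_iff
  rw [this]
  exact (measurableSet_singleton 0).compl.inter
    ((measurableSet_lt measurable_norm measurable_const).inter
      (hS.preimage (measurable_norm.inv.smul measurable_id)))

end Cones

theorem sphereUniform_mul_volume_ball {d : ℕ} (hd : 0 < d) {S : Set (EuclideanSpace ℝ (Fin d))}
    (hS : MeasurableSet S) :
    sphereUniform d S * volume (ball (0 : EuclideanSpace ℝ (Fin d)) 1) =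
      volume (Ioo (0 : ℝ) 1 • (S ∩ sphere 0 1)) := by
  set n : ℝ≥0∞ := (finrank ℝ (EuclideanSpace ℝ (Fin d)) : ℝ≥0∞)
  set V := volume (ball (0 : EuclideanSpace ℝ (Fin d)) 1)
  have hn : n ≠ 0 := by simp [n]; omega
  have hV : V ≠ 0 := (measure_ball_pos _ _ one_pos).ne'
  rw [sphereUniform, Measure.smul_apply, Measure.map_apply measurable_subtype_coe hS,
    Measure.toSphere_apply' _ (measurable_subtype_coe hS), Measure.toSphere_apply_univ,
    Subtype.image_preimage_coe, inter_comm, smul_eq_mul, ENNReal.mul_inv (.inl hn) (.inr hV)]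
  calc _ = (n⁻¹ * n) * (V⁻¹ * V) * volume (Ioo (0 : ℝ) 1 • (S ∩ sphere 0 1)) := by ring
    _ = _ := by
      rw [ENNReal.inv_mul_cancel hn (ENNReal.natCast_ne_top _),
        ENNReal.inv_mul_cancel hV measure_ball_lt_top.ne, one_mul, one_mul]

section Polar
variable {F : Type*} [NormedAddCommGroup F] [NormedSpace ℝ F] [FiniteDimensional ℝ F]
  [MeasurableSpace F] [BorelSpace F] [Nontrivial F]

theorem MeasureTheory.Measure.measurePreserving_smul_sphere (μ : Measure F)
    [μ.IsAddHaarMeasure] :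
    MeasurePreserving (fun ur : sphere (0 : F) 1 × Ioi (0 : ℝ) => (ur.2 : ℝ) • (ur.1 : F))
      (μ.toSphere.prod (Measure.volumeIoiPow (finrank ℝ F - 1))) μ := by
  have hcoe : MeasurePreserving (Subtype.val : ({0}ᶜ : Set F) → F) (μ.comap (↑)) μ := by
    refine ⟨measurable_subtype_coe, ?_⟩
    rw [(MeasurableEmbedding.subtype_coe (measurableSet_singleton 0).compl).map_comap,
      Subtype.range_coe, restrict_compl_singleton]
  exact hcoe.comp (μ.measurePreserving_homeomorphUnitSphereProd.symm
    (homeomorphUnitSphereProd F).toMeasurableEquiv)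

end Polar

def halfPlaneNorm (q : ℝ × Ioi (0 : ℝ)) : ℝ := √(q.1 ^ 2 + (q.2 : ℝ) ^ 2)

def halfDisk : Set (ℝ × Ioi (0 : ℝ)) := {q | halfPlaneNorm q < 1}

theorem halfPlaneNorm_pos (q : ℝ × Ioi (0 : ℝ)) : 0 < halfPlaneNorm q :=
  Real.sqrt_pos.2 (add_pos_of_nonneg_of_pos (sq_nonneg _) (pow_pos q.2.2 2))

theorem div_halfPlaneNorm_sq_add_sq (q : ℝ × Ioi (0 : ℝ)) :
    (q.1 / halfPlaneNorm q) ^ 2 + ((q.2 : ℝ) / halfPlaneNorm q) ^ 2 = 1 := by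
  have hsq : halfPlaneNorm q ^ 2 = q.1 ^ 2 + (q.2 : ℝ) ^ 2 := Real.sq_sqrt (by positivity)
  rw [div_pow, div_pow, ← add_div, ← hsq, div_self (pow_pos (halfPlaneNorm_pos q) 2).ne']

@[fun_prop]
theorem continuous_halfPlaneNorm : Continuous halfPlaneNorm := by
  unfold halfPlaneNorm
  fun_prop

section Cylindrical
variable {E : Type*} [NormedAddCommGroup E] [InnerProductSpace ℝ E] {x : E}

theorem finrank_orthogonal_span_singleton_eq_sub_one [FiniteDimensional ℝ E] (hx : x ≠ 0) :
    finrank ℝ (ℝ ∙ x)ᗮ = finrank ℝ E - 1 := by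
  have := (ℝ ∙ x).finrank_add_finrank_orthogonal
  rw [finrank_span_singleton hx] at this
  omega

theorem nontrivial_orthogonal_span_singleton [FiniteDimensional ℝ E] (hx : x ≠ 0)
    (hE : 2 ≤ finrank ℝ E) : Nontrivial (ℝ ∙ x)ᗮ :=
  nontrivial_of_finrank_pos (R := ℝ) <| by
    rw [finrank_orthogonal_span_singleton_eq_sub_one hx]
    omega

def cylindricalCoords (x : E) (w : sphere (0 : (ℝ ∙ x)ᗮ) 1 × ℝ × Ioi (0 : ℝ)) : E :=
  w.2.1 • x + (w.2.2 : ℝ) • ((w.1 : (ℝ ∙ x)ᗮ) : E)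

theorem norm_cylindricalCoords (hx : ‖x‖ = 1) (w : sphere (0 : (ℝ ∙ x)ᗮ) 1 × ℝ × Ioi (0 : ℝ)) :
    ‖cylindricalCoords x w‖ = halfPlaneNorm w.2 :=
  norm_smul_add_smul_of_orthonormal hx (mem_sphere_zero_iff_norm.1 w.1.2)
    (Submodule.mem_orthogonal_singleton_iff_inner_right.1 w.1.1.2) _ _

theorem preimage_cylindricalCoords_Ioo_smul (hx : ‖x‖ = 1) (S : Set E) :
    cylindricalCoords x ⁻¹' (Ioo (0 : ℝ) 1 • (S ∩ sphere 0 1)) =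
      {w | w.2 ∈ halfDisk ∧ (w.2.1 / halfPlaneNorm w.2) • x +
        ((w.2.2 : ℝ) / halfPlaneNorm w.2) • ((w.1 : (ℝ ∙ x)ᗮ) : E) ∈ S} := by
  ext w
  have hne : cylindricalCoords x w ≠ 0 := by
    rw [← norm_pos_iff, norm_cylindricalCoords hx]
    exact halfPlaneNorm_pos w.2
  rw [mem_preimage, mem_Ioo_smul_inter_sphere_iff, and_iff_right hne, norm_cylindricalCoords hx]
  simp only [cylindricalCoords, smul_add, smul_smul, inv_mul_eq_div, halfDisk, mem_ofPred_eq]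

theorem preimage_cylindricalCoords_Ioo_smul_univ (hx : ‖x‖ = 1) :
    cylindricalCoords x ⁻¹' (Ioo (0 : ℝ) 1 • (univ ∩ sphere 0 1)) = univ ×ˢ halfDisk := by
  rw [preimage_cylindricalCoords_Ioo_smul hx]
  ext w
  simp

theorem preimage_cylindricalCoords_Ioo_smul_inter_cap (hx : ‖x‖ = 1) (S : Set E) (t : ℝ) :
    cylindricalCoords x ⁻¹' (Ioo (0 : ℝ) 1 • ((S ∩ {z | t ≤ ⟪z, x⟫}) ∩ sphere 0 1)) =
      cylindricalCoords x ⁻¹' (Ioo (0 : ℝ) 1 • (S ∩ sphere 0 1)) ∩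
        univ ×ˢ {q | t ≤ q.1 / halfPlaneNorm q} := by
  ext w
  simp only [preimage_cylindricalCoords_Ioo_smul hx, mem_inter_iff, mem_ofPred_eq, mem_prod,
    mem_univ, true_and, inner_smul_add_smul_left_of_orthonormal hx
      (Submodule.mem_orthogonal_singleton_iff_inner_right.1 w.1.1.2)]
  tauto

variable [FiniteDimensional ℝ E] [MeasurableSpace E] [BorelSpace E]

theorem measurePreserving_smul_add_orthogonal (hx : ‖x‖ = 1) :
    MeasurePreserving (fun ay : ℝ × (ℝ ∙ x)ᗮ => ay.1 • x + (ay.2 : E))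
      (volume.prod volume) volume := by
  have hfun : (fun ay : ℝ × (ℝ ∙ x)ᗮ => ay.1 • x + (ay.2 : E)) =
      (ℝ ∙ x).orthogonalDecomposition.symm ∘ WithLp.toLp 2 ∘
        Prod.map (LinearIsometryEquiv.toSpanUnitSingleton x hx) id := by
    funext ay
    simp
  rw [hfun]
  exact (ℝ ∙ x).orthogonalDecomposition.symm.measurePreserving.comp <|
    (WithLp.volume_preserving_toLp _ _).comp <|
      (LinearIsometryEquiv.toSpanUnitSingleton x hx).measurePreserving.prod
        (MeasurePreserving.id volume)

theorem measurePreserving_cylindricalCoords (hx : ‖x‖ = 1) (hE : 2 ≤ finrank ℝ E) :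
    MeasurePreserving (cylindricalCoords x)
      ((volume : Measure (ℝ ∙ x)ᗮ).toSphere.prod
        ((volume : Measure ℝ).prod (Measure.volumeIoiPow (finrank ℝ E - 2)))) volume := by
  have hx0 : x ≠ 0 := norm_ne_zero_iff.1 (hx ▸ one_ne_zero)
  have := nontrivial_orthogonal_span_singleton hx0 hE
  have hpolar := (volume : Measure (ℝ ∙ x)ᗮ).measurePreserving_smul_sphere
  rw [finrank_orthogonal_span_singleton_eq_sub_one hx0, Nat.sub_sub] at hpolar
  exact (measurePreserving_smul_add_orthogonal hx).comp <|
    ((MeasurePreserving.id volume).prod hpolar).comp (measurePreserving_prodLeftComm _ _ _)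

end Cylindrical

theorem ofReal_mul_measure_halfDisk_le {d : ℕ} (hd : 2 ≤ d) {x : EuclideanSpace ℝ (Fin d)}
    (hx : ‖x‖ = 1) {p t : ℝ} (hcap : sphereUniform d {z | t ≤ ⟪z, x⟫} = ENNReal.ofReal p) :
    ENNReal.ofReal p * (volume.prod (Measure.volumeIoiPow (d - 2))) halfDisk ≤
      (volume.prod (Measure.volumeIoiPow (d - 2)))
        (halfDisk ∩ {q | t ≤ q.1 / halfPlaneNorm q}) := by
  have hE : 2 ≤ finrank ℝ (EuclideanSpace ℝ (Fin d)) := by simpa using hd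
  have := nontrivial_orthogonal_span_singleton (norm_ne_zero_iff.1 (hx ▸ one_ne_zero)) hE
  have hΘ := measurePreserving_cylindricalCoords hx hE
  rw [finrank_euclideanSpace_fin] at hΘ
  have hcap_meas : MeasurableSet {z : EuclideanSpace ℝ (Fin d) | t ≤ ⟪z, x⟫} :=
    measurableSet_le measurable_const (by fun_prop)
  set σ := (volume : Measure (ℝ ∙ x)ᗮ).toSphere
  refine (ENNReal.mul_le_mul_iff_right
    (Measure.measure_univ_ne_zero.2 (Measure.toSphere_ne_zero _)) (measure_ne_top σ univ)).1 ?_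
  calc σ univ * (ENNReal.ofReal p * _)
      = ENNReal.ofReal p *
          volume (Ioo (0 : ℝ) 1 • (univ ∩ sphere (0 : EuclideanSpace ℝ (Fin d)) 1)) := by
        rw [← hΘ.measure_preimage MeasurableSet.univ.Ioo_smul_inter_sphere.nullMeasurableSet,
          preimage_cylindricalCoords_Ioo_smul_univ hx, Measure.prod_prod, mul_left_comm]
    _ ≤ ENNReal.ofReal p * volume (ball (0 : EuclideanSpace ℝ (Fin d)) 1) := by
        gcongr
        exact fun z hz => mem_ball_zero_iff.2 (mem_Ioo_smul_inter_sphere_iff.1 hz).2.1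
    _ = volume (Ioo (0 : ℝ) 1 • ((univ ∩ {z | t ≤ ⟪z, x⟫}) ∩ sphere 0 1)) := by
        rw [← hcap, univ_inter, sphereUniform_mul_volume_ball (by omega) hcap_meas]
    _ = σ univ * _ := by
        rw [← hΘ.measure_preimage
            (MeasurableSet.univ.inter hcap_meas).Ioo_smul_inter_sphere.nullMeasurableSet,
          preimage_cylindricalCoords_Ioo_smul_inter_cap hx,
          preimage_cylindricalCoords_Ioo_smul_univ hx, prod_inter_prod, univ_inter,
          Measure.prod_prod]

theorem cap_positive_correlation_general (d : ℕ) (hd : 2 ≤ d) (p : ℝ) (hp' : p ≤ 1 / 2)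
    (t : ℝ)
    (ht : ∀ x ∈ Metric.sphere (0 : EuclideanSpace ℝ (Fin d)) 1,
      sphereUniform d {w | t ≤ ⟪w, x⟫} = ENNReal.ofReal p)
    (A : Set (EuclideanSpace ℝ (Fin d))) (hAmeas : MeasurableSet A)
    (hAsub : A ⊆ Metric.sphere (0 : EuclideanSpace ℝ (Fin d)) 1)
    (hconv : GeodesicConvex d A)
    (x : EuclideanSpace ℝ (Fin d)) (hx : x ∈ A) :
    ENNReal.ofReal p * sphereUniform d A ≤ sphereUniform d (A ∩ {w | t ≤ ⟪w, x⟫}) := by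
  have hx1 : ‖x‖ = 1 := mem_sphere_zero_iff_norm.1 (hAsub hx)
  have hΘ := measurePreserving_cylindricalCoords hx1 (by simpa using hd)
  rw [finrank_euclideanSpace_fin] at hΘ
  have hcap_meas : MeasurableSet {w : EuclideanSpace ℝ (Fin d) | t ≤ ⟪w, x⟫} :=
    measurableSet_le measurable_const (by fun_prop)
  rw [← ENNReal.mul_le_mul_iff_left
      (measure_ball_pos volume (0 : EuclideanSpace ℝ (Fin d)) one_pos).ne' measure_ball_lt_top.ne,
    mul_assoc, sphereUniform_mul_volume_ball (by omega) hAmeas,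
    sphereUniform_mul_volume_ball (by omega) (hAmeas.inter hcap_meas),
    ← hΘ.measure_preimage hAmeas.Ioo_smul_inter_sphere.nullMeasurableSet,
    ← hΘ.measure_preimage (hAmeas.inter hcap_meas).Ioo_smul_inter_sphere.nullMeasurableSet,
    preimage_cylindricalCoords_Ioo_smul_inter_cap hx1]
  refine mul_prod_le_prod_inter_of_forall_fiber (hΘ.measurable hAmeas.Ioo_smul_inter_sphere)
    (measurableSet_le measurable_const (by fun_prop)) fun u => ?_
  rw [preimage_cylindricalCoords_Ioo_smul hx1]
  refine mul_measure_le_measure_inter_of_upwardClosed (ENNReal.ofReal_le_one.2 (by linarith))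
    (fun q hq => hq.1) ?_ (ofReal_mul_measure_halfDisk_le hd hx1 (ht x (hAsub hx)))
  rintro q ⟨-, hq⟩ q' hq' hle
  exact ⟨hq', hconv.smul_add_smul_mem_of_le hx hx1 (mem_sphere_zero_iff_norm.1 u.2)
    (Submodule.mem_orthogonal_singleton_iff_inner_right.1 u.1.2)
    (div_pos q.2.2 (halfPlaneNorm_pos q)) (div_pos q'.2.2 (halfPlaneNorm_pos q'))
    (div_halfPlaneNorm_sq_add_sq q) (div_halfPlaneNorm_sq_add_sq q') hle hq⟩

theorem cap_positive_correlation (d : ℕ) (hd : 2 ≤ d) (p : ℝ) (hp : 0 < p) (hp' : p ≤ 1 / 2)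
    (t : ℝ)
    (ht : ∀ x ∈ Metric.sphere (0 : EuclideanSpace ℝ (Fin d)) 1,
      sphereUniform d {w | t ≤ ⟪w, x⟫} = ENNReal.ofReal p)
    (A : Set (EuclideanSpace ℝ (Fin d))) (hAmeas : MeasurableSet A)
    (hAsub : A ⊆ Metric.sphere (0 : EuclideanSpace ℝ (Fin d)) 1)
    (hconv : GeodesicConvex d A)
    (x : EuclideanSpace ℝ (Fin d)) (hx : x ∈ A) :
    ENNReal.ofReal p * sphereUniform d A ≤ sphereUniform d (A ∩ {w | t ≤ ⟪w, x⟫}) :=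
  cap_positive_correlation_general d hd p hp' t ht A hAmeas hAsub hconv x hx
end
end

section
/- There exist constants ε, C > 0 (depending only on p) such that for all integers n, d ≥ 2 with log n < ε·d, the probability that the Gaussian random geometric graph GRGG(n,p) is a complete graph satisfies P(Ẽ(n,d,p)) ≥ exp(−C · n · √(d · log n)). -/
open MeasureTheory ProbabilityTheory Real
open scoped RealInnerProductSpace ENNReal NNReal

noncomputable section

/-!
Write `G_i = (a_i, b_i)`, with `a_i ∈ ℝ` the first coordinate. If every `a_i ≥ s`, the first
coordinates contribute at least `s²` to each inner product, so the clique event holds as soon as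
`⟪b_i, b_j⟫ ≥ τ - s²` for all `i < j`. The exponential moment of `⟪G, G'⟫` is
`(1 - c²)^(-d/2) ≤ exp (d c²)` for `c² ≤ 1/2`; the resulting Chernoff bound gives
`τ ≤ (1 - log p) √d`, and with a union bound over pairs it shows that all
`⟪b_i, b_j⟫ ≥ -5 √(d log n)` with probability at least `3/4` when `log n ≤ d/2`. Taking
`s² = (1 - log p) √d + 5 √(d log n)`, the two events are independent and the first one has
probability `P(N(0,1) ≥ s)^n ≥ exp (-O(n s²)) = exp (-O(n √(d log n)))`.
-/

open Set

lemma measure_ge_le_exp_neg_mul_lintegral_exp {α : Type*} [MeasurableSpace α] (μ : Measure α)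
    {f : α → ℝ} (hf : Measurable f) (u : ℝ) :
    μ {x | u ≤ f x} ≤ ENNReal.ofReal (exp (-u)) * ∫⁻ x, ENNReal.ofReal (exp (f x)) ∂μ := by
  have hmarkov := mul_meas_ge_le_lintegral₀ (μ := μ)
    (ENNReal.measurable_ofReal.comp (measurable_exp.comp hf)).aemeasurable
    (ENNReal.ofReal (exp u))
  calc μ {x | u ≤ f x}
      ≤ ENNReal.ofReal (exp (-u)) * (ENNReal.ofReal (exp u) *
          μ {x | ENNReal.ofReal (exp u) ≤ ENNReal.ofReal (exp (f x))}) := by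
        rw [← mul_assoc, ← ENNReal.ofReal_mul (exp_pos _).le, ← exp_add, neg_add_cancel,
          exp_zero, ENNReal.ofReal_one, one_mul]
        exact measure_mono fun x hx ↦ ENNReal.ofReal_le_ofReal (exp_le_exp.2 hx)
    _ ≤ _ := by gcongr; exact hmarkov

lemma ofReal_exp_sum {ι : Type*} (s : Finset ι) (f : ι → ℝ) :
    ENNReal.ofReal (exp (∑ k ∈ s, f k)) = ∏ k ∈ s, ENNReal.ofReal (exp (f k)) := by
  rw [exp_sum, ENNReal.ofReal_prod_of_nonneg fun _ _ ↦ (exp_pos _).le]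

lemma lintegral_fintype_prod_eq_prod {ι X : Type*} [Fintype ι] [MeasurableSpace X]
    (μ : Measure X) [IsProbabilityMeasure μ] (f : ι → X → ℝ≥0∞) (hf : ∀ i, Measurable (f i)) :
    ∫⁻ x, ∏ i, f i (x i) ∂Measure.pi (fun _ ↦ μ) = ∏ i, ∫⁻ y, f i y ∂μ := by
  refine (lintegral_prod_eq_prod_lintegral_of_indepFun Finset.univ
    (fun i (x : ι → X) ↦ f i (x i)) (iIndepFun_pi fun i ↦ (hf i).aemeasurable)
    fun i ↦ (hf i).comp (measurable_pi_apply i)).trans ?_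
  exact Finset.prod_congr rfl fun i _ ↦ (measurePreserving_eval _ i).lintegral_comp (hf i)

lemma measurePreserving_eval_pair {ι X : Type*} [Fintype ι] [MeasurableSpace X] (μ : Measure X)
    [IsProbabilityMeasure μ] {i j : ι} (hij : i ≠ j) :
    MeasurePreserving (fun x ↦ (x i, x j)) (Measure.pi fun _ ↦ μ) (μ.prod μ) := by
  refine ⟨by fun_prop, ?_⟩
  have hind : IndepFun (fun x : ι → X ↦ x i) (fun x ↦ x j) (Measure.pi fun _ ↦ μ) :=
    (iIndepFun_pi (μ := fun _ : ι ↦ μ) (X := fun _ ↦ id) fun _ ↦ aemeasurable_id).indepFun hij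
  rw [(indepFun_iff_map_prod_eq_prod_map_map (measurable_pi_apply i).aemeasurable
    (measurable_pi_apply j).aemeasurable).1 hind, (measurePreserving_eval _ i).map_eq,
    (measurePreserving_eval _ j).map_eq]

lemma measure_exists_pair_mem_le {ι X : Type*} [Fintype ι] [MeasurableSpace X] (μ : Measure X)
    [IsProbabilityMeasure μ] {T : Set (X × X)} (hT : MeasurableSet T) :
    (Measure.pi fun _ : ι ↦ μ) {x | ∃ i j, i ≠ j ∧ (x i, x j) ∈ T}
      ≤ Fintype.card ι ^ 2 * (μ.prod μ) T := by
  classical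
  have hcover : {x : ι → X | ∃ i j, i ≠ j ∧ (x i, x j) ∈ T}
      = ⋃ q ∈ (Finset.univ : Finset ι).offDiag, (fun x ↦ (x q.1, x q.2)) ⁻¹' T := by
    ext x
    simp
  rw [hcover]
  refine (measure_biUnion_finset_le _ _).trans ?_
  calc ∑ q ∈ (Finset.univ : Finset ι).offDiag,
        (Measure.pi fun _ ↦ μ) ((fun x ↦ (x q.1, x q.2)) ⁻¹' T)
      = ∑ _q ∈ (Finset.univ : Finset ι).offDiag, (μ.prod μ) T :=
        Finset.sum_congr rfl fun q hq ↦
          (measurePreserving_eval_pair μ (Finset.mem_offDiag.1 hq).2.2).measure_preimage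
            hT.nullMeasurableSet
    _ ≤ Fintype.card ι ^ 2 * (μ.prod μ) T := by
        rw [Finset.sum_const, nsmul_eq_mul]
        gcongr
        rw [Finset.offDiag_card, Finset.card_univ]
        exact_mod_cast (Nat.sub_le _ _).trans (sq _).ge

lemma lintegral_exp_mul_gaussianReal (t : ℝ) :
    ∫⁻ x, ENNReal.ofReal (exp (t * x)) ∂gaussianReal 0 1 = ENNReal.ofReal (exp (t ^ 2 / 2)) := by
  rw [← ofReal_integral_eq_lintegral_ofReal (integrable_exp_mul_gaussianReal t)
    (.of_forall fun _ ↦ (exp_pos _).le)]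
  simpa [mgf] using
    congrArg ENNReal.ofReal (congrFun (mgf_fun_id_gaussianReal (μ := 0) (v := 1)) t)

lemma lintegral_exp_mul_sq_gaussianReal {a : ℝ} (ha : a < 1) :
    ∫⁻ x, ENNReal.ofReal (exp (a * x ^ 2 / 2)) ∂gaussianReal 0 1
      = ENNReal.ofReal (√(1 - a))⁻¹ := by
  have hb : 0 < (1 - a) / 2 := by linarith
  rw [gaussianReal_of_var_ne_zero 0 one_ne_zero,
    lintegral_withDensity_eq_lintegral_mul _ (measurable_gaussianPDF 0 1) (by fun_prop)]
  have hpdf : ∀ x, (gaussianPDF 0 1 * fun x ↦ ENNReal.ofReal (exp (a * x ^ 2 / 2))) x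
      = ENNReal.ofReal ((√(2 * π))⁻¹ * exp (-((1 - a) / 2) * x ^ 2)) := by
    intro x
    simp only [Pi.mul_apply, gaussianPDF, gaussianPDFReal, NNReal.coe_one, mul_one, sub_zero]
    rw [← ENNReal.ofReal_mul (by positivity), mul_assoc, ← exp_add]
    ring_nf
  simp_rw [hpdf]
  rw [← ofReal_integral_eq_lintegral_ofReal ((integrable_exp_neg_mul_sq hb).const_mul _)
    (.of_forall fun _ ↦ by positivity), integral_const_mul, integral_gaussian,
    show π / ((1 - a) / 2) = 2 * π / (1 - a) by field_simp, sqrt_div' _ (by linarith : 0 ≤ 1 - a)]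
  congr 1
  field_simp

lemma inv_sqrt_one_sub_le_exp {a : ℝ} (ha₀ : 0 ≤ a) (ha : a ≤ 1 / 2) :
    (√(1 - a))⁻¹ ≤ exp a := by
  have hpos : 0 < √(1 - a) := sqrt_pos.2 (by linarith)
  rw [inv_le_iff_one_le_mul₀ hpos, ← sqrt_sq (exp_pos a).le, ← sqrt_mul (by positivity),
    one_le_sqrt, sq, ← exp_add]
  nlinarith [add_one_le_exp (a + a)]

lemma ofReal_exp_le_gaussianReal_Ici {s : ℝ} (hs : 0 ≤ s) :
    ENNReal.ofReal (exp (-(s + 1) ^ 2 / 2 - 1)) ≤ gaussianReal 0 1 (Ici s) := by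
  have hpdf : ∀ x ∈ Ico s (s + 1),
      ENNReal.ofReal (exp (-(s + 1) ^ 2 / 2 - 1)) ≤ gaussianPDF 0 1 x := by
    intro x hx
    refine ENNReal.ofReal_le_ofReal ?_
    have hexp : exp (-1) ≤ (√(2 * π))⁻¹ := by
      rw [exp_neg]
      refine inv_anti₀ (by positivity) (sqrt_le_iff.2 ⟨(exp_pos 1).le, ?_⟩)
      nlinarith [pi_lt_d2, exp_one_gt_d9]
    have hsq : exp (-(s + 1) ^ 2 / 2) ≤ exp (-x ^ 2 / 2) :=
      exp_le_exp.2 (by nlinarith [hx.1, hx.2])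
    simp only [gaussianPDFReal, NNReal.coe_one, mul_one, sub_zero]
    rw [sub_eq_add_neg, exp_add, mul_comm]
    exact mul_le_mul hexp hsq (exp_pos _).le (by positivity)
  calc ENNReal.ofReal (exp (-(s + 1) ^ 2 / 2 - 1))
      = ∫⁻ _ in Ico s (s + 1), ENNReal.ofReal (exp (-(s + 1) ^ 2 / 2 - 1)) := by simp
    _ ≤ ∫⁻ x in Ico s (s + 1), gaussianPDF 0 1 x :=
        setLIntegral_mono (measurable_gaussianPDF 0 1) hpdf
    _ ≤ gaussianReal 0 1 (Ici s) := by
        rw [gaussianReal_apply 0 one_ne_zero]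
        exact lintegral_mono_set Ico_subset_Ici_self

lemma ofReal_exp_le_gaussianReal_Ici_pow_mul {n : ℕ} (hn : 1 ≤ n) {s K L : ℝ} (hs : 0 ≤ s)
    (hL : 1 ≤ L) (hsL : s ^ 2 ≤ K * L) :
    ENNReal.ofReal (exp (-(K + 3) * n * L))
      ≤ gaussianReal 0 1 (Ici s) ^ n * ENNReal.ofReal (3 / 4) := by
  have hn' : (1 : ℝ) ≤ n := by exact_mod_cast hn
  have hcost : -(K + 3) * n * L ≤ n * (-(s + 1) ^ 2 / 2 - 1) - 1 := by
    nlinarith [sq_nonneg (s - 1), mul_le_mul hn' hL zero_le_one (by linarith),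
      mul_le_mul_of_nonneg_left hsL (by linarith : (0 : ℝ) ≤ n)]
  calc ENNReal.ofReal (exp (-(K + 3) * n * L))
      ≤ ENNReal.ofReal (exp (-(s + 1) ^ 2 / 2 - 1)) ^ n * ENNReal.ofReal (3 / 4) := by
        rw [← ENNReal.ofReal_pow (exp_pos _).le, ← ENNReal.ofReal_mul (by positivity),
          ← exp_nat_mul]
        refine ENNReal.ofReal_le_ofReal ?_
        calc exp (-(K + 3) * n * L) ≤ exp (n * (-(s + 1) ^ 2 / 2 - 1)) * exp (-1) := by
              rw [← exp_add]
              exact exp_le_exp.2 (by linarith)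
          _ ≤ _ := by gcongr; linarith [exp_neg_one_lt_half]
    _ ≤ _ := by gcongr; exact ofReal_exp_le_gaussianReal_Ici hs

lemma measurePreserving_toLp_stdGaussian (d : ℕ) :
    MeasurePreserving (WithLp.toLp 2) (Measure.pi fun _ : Fin d ↦ gaussianReal 0 1)
      (stdGaussian d) :=
  ⟨(MeasurableEquiv.toLp 2 (Fin d → ℝ)).measurable, rfl⟩

instance (d : ℕ) : IsProbabilityMeasure (stdGaussian d) :=
  Measure.isProbabilityMeasure_map (MeasurableEquiv.measurable _).aemeasurable

lemma lintegral_exp_mul_inner_stdGaussian (d : ℕ) (c : ℝ) (x : EuclideanSpace ℝ (Fin d)) :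
    ∫⁻ y, ENNReal.ofReal (exp (c * ⟪x, y⟫)) ∂stdGaussian d
      = ENNReal.ofReal (exp (c ^ 2 * ‖x‖ ^ 2 / 2)) := by
  rw [← (measurePreserving_toLp_stdGaussian d).lintegral_comp (by fun_prop)]
  simp only [PiLp.inner_apply, RCLike.inner_apply, conj_trivial, Finset.mul_sum,
    ofReal_exp_sum, EuclideanSpace.real_norm_sq_eq, Finset.sum_div]
  rw [lintegral_fintype_prod_eq_prod _ (fun k y ↦ ENNReal.ofReal (exp (c * (y * x k))))
    fun _ ↦ by fun_prop]
  refine Finset.prod_congr rfl fun k _ ↦ ?_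
  simp_rw [mul_left_comm c, mul_comm _ (c * _), lintegral_exp_mul_gaussianReal, mul_pow]

lemma lintegral_exp_mul_sq_norm_stdGaussian_le (d : ℕ) {a : ℝ} (ha₀ : 0 ≤ a) (ha : a ≤ 1 / 2) :
    ∫⁻ x, ENNReal.ofReal (exp (a * ‖x‖ ^ 2 / 2)) ∂stdGaussian d
      ≤ ENNReal.ofReal (exp (d * a)) := by
  rw [← (measurePreserving_toLp_stdGaussian d).lintegral_comp (by fun_prop)]
  simp only [EuclideanSpace.real_norm_sq_eq, Finset.mul_sum, Finset.sum_div, ofReal_exp_sum]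
  rw [lintegral_fintype_prod_eq_prod _ (fun _ y ↦ ENNReal.ofReal (exp (a * y ^ 2 / 2)))
    fun _ ↦ by fun_prop]
  calc ∏ _k : Fin d, ∫⁻ y, ENNReal.ofReal (exp (a * y ^ 2 / 2)) ∂gaussianReal 0 1
      ≤ ∏ _k : Fin d, ENNReal.ofReal (exp a) := by
        gcongr
        rw [lintegral_exp_mul_sq_gaussianReal (by linarith)]
        exact ENNReal.ofReal_le_ofReal (inv_sqrt_one_sub_le_exp ha₀ ha)
    _ = ENNReal.ofReal (exp (d * a)) := by
        rw [Finset.prod_const, Finset.card_univ, Fintype.card_fin,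
          ← ENNReal.ofReal_pow (exp_pos a).le, ← exp_nat_mul]

lemma lintegral_exp_mul_inner_stdGaussian_prod_le (d : ℕ) {c : ℝ} (hc : c ^ 2 ≤ 1 / 2) :
    ∫⁻ xy, ENNReal.ofReal (exp (c * ⟪xy.1, xy.2⟫)) ∂(stdGaussian d).prod (stdGaussian d)
      ≤ ENNReal.ofReal (exp (d * c ^ 2)) := by
  rw [lintegral_prod _ (by fun_prop)]
  simp_rw [lintegral_exp_mul_inner_stdGaussian]
  exact lintegral_exp_mul_sq_norm_stdGaussian_le d (sq_nonneg c) hc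

lemma stdGaussian_prod_mul_inner_ge_le (d : ℕ) {c : ℝ} (hc : c ^ 2 ≤ 1 / 2) (u : ℝ) :
    ((stdGaussian d).prod (stdGaussian d)) {xy | u ≤ c * ⟪xy.1, xy.2⟫}
      ≤ ENNReal.ofReal (exp (d * c ^ 2 - u)) := by
  refine (measure_ge_le_exp_neg_mul_lintegral_exp _ (by fun_prop) u).trans ?_
  refine (mul_le_mul_right (lintegral_exp_mul_inner_stdGaussian_prod_le d hc) _).trans_eq ?_
  rw [← ENNReal.ofReal_mul (exp_pos _).le, ← exp_add, neg_add_eq_sub]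

lemma IsGaussThreshold.le_mul_sqrt {d : ℕ} {p τ : ℝ} (hd : 2 ≤ d) (hp : 0 < p)
    (hτ : IsGaussThreshold d p τ) : τ ≤ (1 - log p) * √d := by
  have hd₀ : (0 : ℝ) < d := by positivity
  have hsqrt : 0 < √(d : ℝ) := sqrt_pos.2 hd₀
  set c : ℝ := (√(d : ℝ))⁻¹
  have hc : c ^ 2 = (d : ℝ)⁻¹ := by rw [inv_pow, sq_sqrt hd₀.le]
  have hchernoff : ENNReal.ofReal p ≤ ENNReal.ofReal (exp (1 - c * τ)) := by
    rw [← hτ, ← mul_inv_cancel₀ hd₀.ne', ← hc]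
    refine (measure_mono fun xy hxy ↦ ?_).trans (stdGaussian_prod_mul_inner_ge_le d ?_ (c * τ))
    · exact mul_le_mul_of_nonneg_left (show τ ≤ ⟪xy.1, xy.2⟫ from hxy) (by positivity)
    · rw [hc, inv_le_comm₀ hd₀ (by norm_num), one_div, inv_inv]
      exact_mod_cast hd
  have hlog : log p ≤ 1 - c * τ :=
    (log_le_iff_le_exp hp).2 ((ENNReal.ofReal_le_ofReal_iff (exp_pos _).le).1 hchernoff)
  have hτc : τ = c * τ * √d := by rw [mul_comm c, mul_assoc, inv_mul_cancel₀ hsqrt.ne', mul_one]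
  rw [hτc]
  gcongr
  linarith

lemma measurableSet_cliqueSet (n d : ℕ) (t : ℝ) : MeasurableSet (cliqueSet n d t) := by
  simp only [cliqueSet, Set.ofPred_forall]
  exact .iInter fun i ↦ .iInter fun j ↦ .iInter fun _ ↦
    measurableSet_le measurable_const (by fun_prop)

lemma cliqueSet_anti (n d : ℕ) : Antitone (cliqueSet n d) :=
  fun _ _ hst _ hX i j hij ↦ hst.trans (hX i j hij)

lemma measure_compl_cliqueSet_le (n d : ℕ) {c : ℝ} (hc₀ : 0 ≤ c) (hc : c ^ 2 ≤ 1 / 2) (K : ℝ) :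
    (Measure.pi fun _ : Fin n ↦ stdGaussian d) (cliqueSet n d (-K))ᶜ
      ≤ n ^ 2 * ENNReal.ofReal (exp (d * c ^ 2 - c * K)) := by
  have hsub : (cliqueSet n d (-K))ᶜ
      ⊆ {x | ∃ i j, i ≠ j ∧ (x i, x j) ∈ {xy | c * K ≤ -c * ⟪xy.1, xy.2⟫}} := by
    intro x hx
    simp only [cliqueSet, mem_compl_iff, Set.mem_ofPred_eq, not_forall, not_le] at hx
    obtain ⟨i, j, hij, hlt⟩ := hx
    refine ⟨i, j, hij.ne, show c * K ≤ -c * ⟪x i, x j⟫ from ?_⟩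
    nlinarith [mul_le_mul_of_nonneg_left hlt.le hc₀]
  refine (measure_mono hsub).trans ((measure_exists_pair_mem_le _ ?_).trans ?_)
  · exact measurableSet_le measurable_const (by fun_prop)
  · rw [Fintype.card_fin]
    gcongr
    simpa using stdGaussian_prod_mul_inner_ge_le d (c := -c) (by simpa using hc) (c * K)

lemma measure_compl_cliqueSet_le_one_quarter {n d : ℕ} {D : ℝ} (hn : 2 ≤ n) (hdD : d ≤ D)
    (hlog : log n ≤ D / 2) :
    (Measure.pi fun _ : Fin n ↦ stdGaussian d) (cliqueSet n d (-(5 * √(D * log n))))ᶜ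
      ≤ ENNReal.ofReal (1 / 4) := by
  have hn' : (2 : ℝ) ≤ n := by exact_mod_cast hn
  have hlogn : 0 < log n := log_pos (by linarith)
  have hD : 0 < D := by linarith
  set c := √(log n / D)
  have hc : c ^ 2 = log n / D := sq_sqrt (by positivity)
  have hcK : c * (5 * √(D * log n)) = 5 * log n := by
    rw [mul_left_comm, ← sqrt_mul (by positivity),
      show log n / D * (D * log n) = log n * log n by field_simp, sqrt_mul_self hlogn.le]
  have hexp : d * c ^ 2 - c * (5 * √(D * log n)) ≤ -log (n ^ 2 * 4) := by
    rw [hc, hcK, log_mul (by positivity) (by norm_num), log_pow]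
    have : d * (log n / D) ≤ log n := by
      rw [mul_div_assoc']
      exact div_le_of_le_mul₀ hD.le hlogn.le (by nlinarith)
    have : log 4 ≤ 2 * log n := by
      rw [show (4 : ℝ) = 2 ^ 2 by norm_num, log_pow]
      gcongr
      push_cast
      linarith
    push_cast
    linarith
  have hquarter : (n : ℝ≥0∞) ^ 2 * ENNReal.ofReal (exp (-log (n ^ 2 * 4)))
      = ENNReal.ofReal (1 / 4) := by
    rw [← ENNReal.ofReal_natCast, ← ENNReal.ofReal_pow (by positivity),
      ← ENNReal.ofReal_mul (by positivity), exp_neg, exp_log (by positivity)]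
    congr 1
    field_simp
  exact hquarter ▸ (measure_compl_cliqueSet_le n d (sqrt_nonneg _)
    (by rw [hc, div_le_iff₀ hD]; linarith) _).trans (by gcongr)

lemma three_quarters_le_measure_cliqueSet {n d : ℕ} {D : ℝ} (hn : 2 ≤ n) (hdD : d ≤ D)
    (hlog : log n ≤ D / 2) :
    ENNReal.ofReal (3 / 4) ≤ (Measure.pi fun _ : Fin n ↦ stdGaussian d)
      (cliqueSet n d (-(5 * √(D * log n)))) := by
  have hcompl := measure_compl_cliqueSet_le_one_quarter (d := d) hn hdD hlog
  rw [← compl_compl (cliqueSet n d _), prob_compl_eq_one_sub (measurableSet_cliqueSet n d _).compl]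
  refine ENNReal.le_sub_of_add_le_right (measure_ne_top _ _) ?_
  calc ENNReal.ofReal (3 / 4) + _ ≤ ENNReal.ofReal (3 / 4) + ENNReal.ofReal (1 / 4) := by gcongr
    _ = 1 := by rw [← ENNReal.ofReal_add (by norm_num) (by norm_num)]; norm_num

def euclideanCons (d : ℕ) (z : ℝ × EuclideanSpace ℝ (Fin d)) : EuclideanSpace ℝ (Fin (d + 1)) :=
  WithLp.toLp 2 (Fin.cons z.1 z.2.ofLp)

lemma inner_euclideanCons (d : ℕ) (z w : ℝ × EuclideanSpace ℝ (Fin d)) :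
    ⟪euclideanCons d z, euclideanCons d w⟫ = z.1 * w.1 + ⟪z.2, w.2⟫ := by
  simp [euclideanCons, PiLp.inner_apply, Fin.sum_univ_succ, mul_comm]

lemma measurePreserving_euclideanCons (d : ℕ) :
    MeasurePreserving (euclideanCons d) ((gaussianReal 0 1).prod (stdGaussian d))
      (stdGaussian (d + 1)) := by
  have hofLp : MeasurePreserving WithLp.ofLp (stdGaussian d)
      (Measure.pi fun _ : Fin d ↦ gaussianReal 0 1) :=
    (measurePreserving_toLp_stdGaussian d).symm (MeasurableEquiv.toLp 2 (Fin d → ℝ))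
  have hcons :=
    (measurePreserving_piFinSuccAbove (fun _ : Fin (d + 1) ↦ gaussianReal 0 1) 0).symm
      (MeasurableEquiv.piFinSuccAbove (fun _ : Fin (d + 1) ↦ ℝ) 0)
  convert (measurePreserving_toLp_stdGaussian (d + 1)).comp
    (hcons.comp ((MeasurePreserving.id (gaussianReal 0 1)).prod hofLp)) using 1
  funext z
  simp [euclideanCons, MeasurableEquiv.piFinSuccAbove_symm_apply, Fin.consEquiv]

lemma gaussianReal_Ici_pow_mul_measure_cliqueSet_le (n d : ℕ) (τ : ℝ) {s : ℝ} (hs : 0 ≤ s) :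
    gaussianReal 0 1 (Ici s) ^ n
        * (Measure.pi fun _ : Fin n ↦ stdGaussian d) (cliqueSet n d (τ - s ^ 2))
      ≤ (Measure.pi fun _ : Fin n ↦ stdGaussian (d + 1)) (cliqueSet n (d + 1) τ) := by
  set split := MeasurableEquiv.arrowProdEquivProdArrow ℝ (EuclideanSpace ℝ (Fin d)) (Fin n)
  have hsplit := measurePreserving_arrowProdEquivProdArrow ℝ (EuclideanSpace ℝ (Fin d)) (Fin n)
    (fun _ ↦ gaussianReal 0 1) (fun _ ↦ stdGaussian d)
  have hcons := measurePreserving_pi _ _ fun _ : Fin n ↦ measurePreserving_euclideanCons d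
  have hsub : split ⁻¹' (univ.pi (fun _ ↦ Ici s) ×ˢ cliqueSet n d (τ - s ^ 2))
      ⊆ (fun ω i ↦ euclideanCons d (ω i)) ⁻¹' cliqueSet n (d + 1) τ := by
    rintro ω ⟨hfirst, hsecond⟩ i j hij
    have hi : s ≤ (ω i).1 := hfirst i (mem_univ i)
    have hj : s ≤ (ω j).1 := hfirst j (mem_univ j)
    have hij' : τ - s ^ 2 ≤ ⟪(ω i).2, (ω j).2⟫ := hsecond i j hij
    rw [inner_euclideanCons]
    nlinarith [mul_le_mul hi hj hs (hs.trans hi)]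
  calc gaussianReal 0 1 (Ici s) ^ n
        * (Measure.pi fun _ : Fin n ↦ stdGaussian d) (cliqueSet n d (τ - s ^ 2))
      = (Measure.pi fun _ ↦ (gaussianReal 0 1).prod (stdGaussian d))
          (split ⁻¹' (univ.pi (fun _ ↦ Ici s) ×ˢ cliqueSet n d (τ - s ^ 2))) := by
        rw [hsplit.measure_preimage
          ((MeasurableSet.univ_pi fun _ ↦ measurableSet_Ici).prod
            (measurableSet_cliqueSet n d _)).nullMeasurableSet,
          Measure.prod_prod, Measure.pi_pi, Finset.prod_const, Finset.card_univ, Fintype.card_fin]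
    _ ≤ _ := (measure_mono hsub).trans_eq
        (hcons.measure_preimage (measurableSet_cliqueSet n (d + 1) τ).nullMeasurableSet)

theorem gauss_clique_prob_bias_lower_bound (p : ℝ) (hp : 0 < p) (hp' : p ≤ 1 / 2) :
    ∃ ε C : ℝ, 0 < ε ∧ 0 < C ∧ ∀ n d : ℕ, 2 ≤ n → 2 ≤ d →
      Real.log (n : ℝ) < ε * (d : ℝ) → ∀ τ : ℝ, IsGaussThreshold d p τ →
        ENNReal.ofReal (Real.exp (-C * (n : ℝ) * Real.sqrt ((d : ℝ) * Real.log (n : ℝ)))) ≤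
          (Measure.pi fun _ : Fin n => stdGaussian d) (cliqueSet n d τ) := by
  have hCp : 0 ≤ 1 - log p := by linarith [log_nonpos hp.le (by linarith : p ≤ 1)]
  refine ⟨1 / 2, 2 * (1 - log p) + 5 + 3, by norm_num, by linarith, ?_⟩
  intro n d hn hd hlog τ hτ
  obtain ⟨d, rfl⟩ : ∃ d', d = d' + 1 := ⟨d - 1, by omega⟩
  have hlogn : 1 / 2 ≤ log n := by
    linarith [log_two_gt_d9, log_le_log (by norm_num) (by exact_mod_cast hn : (2 : ℝ) ≤ n)]
  set L := √((d + 1 : ℕ) * log n)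
  have hD : (2 : ℝ) ≤ (d + 1 : ℕ) := by exact_mod_cast hd
  have hL : 1 ≤ L := one_le_sqrt.2 (by nlinarith)
  have hdL : √((d + 1 : ℕ) : ℝ) ≤ 2 * L :=
    sqrt_le_iff.2 ⟨by positivity, by rw [mul_pow, sq_sqrt (by positivity)]; nlinarith⟩
  set s := √((1 - log p) * √((d + 1 : ℕ) : ℝ) + 5 * L)
  have hs : s ^ 2 = (1 - log p) * √((d + 1 : ℕ) : ℝ) + 5 * L := sq_sqrt (by positivity)
  have hτs : τ - s ^ 2 ≤ -(5 * L) := by linarith [hτ.le_mul_sqrt hd hp]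
  calc ENNReal.ofReal (exp (-(2 * (1 - log p) + 5 + 3) * n * L))
      ≤ gaussianReal 0 1 (Ici s) ^ n * ENNReal.ofReal (3 / 4) :=
        ofReal_exp_le_gaussianReal_Ici_pow_mul (by omega) (sqrt_nonneg _) hL
          (by nlinarith [mul_le_mul_of_nonneg_left hdL hCp])
    _ ≤ gaussianReal 0 1 (Ici s) ^ n
          * (Measure.pi fun _ : Fin n ↦ stdGaussian d) (cliqueSet n d (-(5 * L))) := by
        gcongr
        exact three_quarters_le_measure_cliqueSet hn (by push_cast; linarith) (by linarith)
    _ ≤ gaussianReal 0 1 (Ici s) ^ n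
          * (Measure.pi fun _ : Fin n ↦ stdGaussian d) (cliqueSet n d (τ - s ^ 2)) := by
        gcongr
        exact cliqueSet_anti n d hτs
    _ ≤ _ := gaussianReal_Ici_pow_mul_measure_cliqueSet_le n d τ (sqrt_nonneg _)
end
end

section
/- There exists a constant C > 0 (depending only on p) such that for all integers n, d ≥ 2, the probability that the Gaussian random geometric graph GRGG(n,p) is a complete graph satisfies P(Ẽ(n,d,p)) ≥ exp(−C · n · d). -/
/-!
Since `⟪x, y⟫ ≤ max ‖x‖² ‖y‖²` and `‖G‖²` has mean `d`, Markov's inequality bounds the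
probability of `⟪G, G'⟫ ≥ τ` by `2d/τ`, so the threshold satisfies `τ ≤ 2d/p`. Put
`a = √(2/p)`. If every coordinate of every `G_i` is at least `a`, then every inner product is at
least `d a² = 2d/p ≥ τ`, so the clique event occurs. By independence of all `nd` coordinates this
happens with probability `P(Z ≥ a)^{nd}`, `Z` a standard normal, and `P(Z ≥ a) > 0` depends
only on `p`.
-/

open MeasureTheory ProbabilityTheory Real
open scoped RealInnerProductSpace ENNReal NNReal

noncomputable section

open Set

instance inst_s12 (d : ℕ) : IsProbabilityMeasure (stdGaussian d) :=
  Measure.isProbabilityMeasure_map (by fun_prop)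

lemma lintegral_sq_gaussianReal (v : ℝ≥0) :
    ∫⁻ x, ENNReal.ofReal (x ^ 2) ∂gaussianReal 0 v = v := by
  have h := ofReal_variance (memLp_id_gaussianReal (μ := 0) (v := v) 2)
  rw [variance_id_gaussianReal, evariance_eq_lintegral_ofReal] at h
  simpa using h.symm

lemma lintegral_norm_sq_stdGaussian (d : ℕ) :
    ∫⁻ x, ENNReal.ofReal (‖x‖ ^ 2) ∂stdGaussian d = d := by
  rw [_root_.stdGaussian, lintegral_map (by fun_prop) (by fun_prop)]
  simp only [MeasurableEquiv.coe_toLp, EuclideanSpace.real_norm_sq_eq,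
    ENNReal.ofReal_sum_of_nonneg fun k _ => sq_nonneg _]
  rw [lintegral_finsetSum _ fun k _ => by fun_prop]
  simp_rw [(measurePreserving_eval (fun _ : Fin d => gaussianReal 0 1) _).lintegral_comp
    (f := fun x : ℝ => ENNReal.ofReal (x ^ 2)) (by fun_prop), lintegral_sq_gaussianReal]
  simp

lemma stdGaussian_norm_sq_ge_le (d : ℕ) {t : ℝ} (ht : 0 < t) :
    stdGaussian d {x | t ≤ ‖x‖ ^ 2} ≤ d / ENNReal.ofReal t := by
  rw [← lintegral_norm_sq_stdGaussian]
  convert meas_ge_le_lintegral_div (μ := stdGaussian d) (f := fun x => ENNReal.ofReal (‖x‖ ^ 2))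
    (by fun_prop) (ENNReal.ofReal_pos.2 ht).ne' ENNReal.ofReal_ne_top using 2
  ext x
  exact (ENNReal.ofReal_le_ofReal_iff (sq_nonneg _)).symm

lemma real_inner_le_max_norm_sq {E : Type*} [NormedAddCommGroup E] [InnerProductSpace ℝ E]
    (x y : E) : ⟪x, y⟫ ≤ max (‖x‖ ^ 2) (‖y‖ ^ 2) := by
  have := real_inner_le_norm x y
  have := two_mul_le_add_sq ‖x‖ ‖y‖
  have := le_max_left (‖x‖ ^ 2) (‖y‖ ^ 2)
  have := le_max_right (‖x‖ ^ 2) (‖y‖ ^ 2)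
  linarith

lemma prod_inner_ge_le_two_mul {E : Type*} [NormedAddCommGroup E] [InnerProductSpace ℝ E]
    [MeasurableSpace E] (μ : Measure E) [IsProbabilityMeasure μ] (t : ℝ) :
    (μ.prod μ) {xy | t ≤ ⟪xy.1, xy.2⟫} ≤ 2 * μ {x | t ≤ ‖x‖ ^ 2} := by
  have hsub : {xy : E × E | t ≤ ⟪xy.1, xy.2⟫} ⊆
      {x | t ≤ ‖x‖ ^ 2} ×ˢ univ ∪ univ ×ˢ {y | t ≤ ‖y‖ ^ 2} := by
    rintro ⟨x, y⟩ hxy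
    rcases le_max_iff.1 (le_trans hxy (real_inner_le_max_norm_sq x y)) with hx | hy
    exacts [Or.inl ⟨hx, trivial⟩, Or.inr ⟨trivial, hy⟩]
  calc (μ.prod μ) {xy | t ≤ ⟪xy.1, xy.2⟫}
      ≤ (μ.prod μ) ({x | t ≤ ‖x‖ ^ 2} ×ˢ univ) + (μ.prod μ) (univ ×ˢ {y | t ≤ ‖y‖ ^ 2}) :=
        (measure_mono hsub).trans (measure_union_le _ _)
    _ = 2 * μ {x | t ≤ ‖x‖ ^ 2} := by simp [Measure.prod_prod, two_mul]

lemma IsGaussThreshold.le_two_mul_div {d : ℕ} {p τ : ℝ} (hp : 0 < p)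
    (h : IsGaussThreshold d p τ) : τ ≤ 2 * d / p := by
  rcases le_or_gt τ 0 with hτ | hτ
  · exact hτ.trans (by positivity)
  have hle : ENNReal.ofReal p ≤ ENNReal.ofReal (2 * d / τ) := by
    calc ENNReal.ofReal p = _ := h.symm
      _ ≤ 2 * stdGaussian d {x | τ ≤ ‖x‖ ^ 2} := prod_inner_ge_le_two_mul _ τ
      _ ≤ 2 * (d / ENNReal.ofReal τ) := by gcongr; exact stdGaussian_norm_sq_ge_le d hτ
      _ = ENNReal.ofReal (2 * d / τ) := by
        rw [ENNReal.ofReal_div_of_pos hτ, ENNReal.ofReal_mul zero_le_two, mul_div_assoc]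
        simp
  rw [ENNReal.ofReal_le_ofReal_iff (by positivity), le_div_iff₀ hτ] at hle
  rw [le_div_iff₀ hp]
  linarith

lemma stdGaussian_coord_ge (d : ℕ) (a : ℝ) :
    stdGaussian d {x | ∀ k, a ≤ x k} = gaussianReal 0 1 (Ici a) ^ d := by
  rw [_root_.stdGaussian, MeasurableEquiv.map_apply]
  have : MeasurableEquiv.toLp 2 (Fin d → ℝ) ⁻¹' {x | ∀ k, a ≤ x k} = univ.pi fun _ => Ici a := by
    ext x
    simp only [mem_preimage, mem_univ_pi, mem_Ici]
    rfl
  rw [this, Measure.pi_pi]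
  simp

lemma gaussianReal_Ici_ne_zero (μ : ℝ) {v : ℝ≥0} (hv : v ≠ 0) (a : ℝ) :
    gaussianReal μ v (Ici a) ≠ 0 := fun h => by
  simpa using gaussianReal_absolutelyContinuous' μ hv h

lemma pi_coord_ge_subset_cliqueSet {n d : ℕ} {a τ : ℝ} (ha : 0 ≤ a) (hτ : τ ≤ d * a ^ 2) :
    univ.pi (fun _ : Fin n => {x : EuclideanSpace ℝ (Fin d) | ∀ k, a ≤ x k}) ⊆
      cliqueSet n d τ := by
  intro X hX i j _
  calc τ ≤ d * a ^ 2 := hτ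
    _ = ∑ _k : Fin d, a * a := by simp [sq]
    _ ≤ ∑ k, X j k * X i k := Finset.sum_le_sum fun k _ =>
        mul_le_mul (hX j trivial k) (hX i trivial k) ha (ha.trans (hX j trivial k))
    _ = ⟪X i, X j⟫ := by simp [PiLp.inner_apply]

lemma exists_pos_ofReal_exp_neg_mul_le_pow {q : ℝ≥0∞} (h0 : q ≠ 0) (htop : q ≠ ∞) :
    ∃ C : ℝ, 0 < C ∧ ∀ m : ℕ, ENNReal.ofReal (exp (-C * m)) ≤ q ^ m := by
  have hq : 0 < q.toReal := ENNReal.toReal_pos h0 htop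
  refine ⟨1 + |log q.toReal|, by positivity, fun m => ?_⟩
  have hbase : exp (-(1 + |log q.toReal|)) ≤ q.toReal := by
    calc exp (-(1 + |log q.toReal|)) ≤ exp (log q.toReal) :=
          exp_le_exp.2 (by linarith [neg_abs_le (log q.toReal)])
      _ = q.toReal := exp_log hq
  calc ENNReal.ofReal (exp (-(1 + |log q.toReal|) * m))
      = ENNReal.ofReal (exp (-(1 + |log q.toReal|)) ^ m) := by rw [← exp_nat_mul, mul_comm]
    _ ≤ ENNReal.ofReal (q.toReal ^ m) := by gcongr
    _ = q ^ m := by rw [ENNReal.ofReal_pow hq.le, ENNReal.ofReal_toReal htop]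

theorem gauss_clique_prob_strong_bias_lower_bound_general (p : ℝ) (hp : 0 < p) :
    ∃ C : ℝ, 0 < C ∧ ∀ n d : ℕ, 2 ≤ n → 2 ≤ d → ∀ τ : ℝ, IsGaussThreshold d p τ →
      ENNReal.ofReal (Real.exp (-C * (n : ℝ) * (d : ℝ))) ≤
        (Measure.pi fun _ : Fin n => stdGaussian d) (cliqueSet n d τ) := by
  set a := √(2 / p)
  obtain ⟨C, hC, hexp⟩ := exists_pos_ofReal_exp_neg_mul_le_pow
    (gaussianReal_Ici_ne_zero 0 one_ne_zero a) (measure_ne_top _ _)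
  refine ⟨C, hC, fun n d _ _ τ hτ => ?_⟩
  have hτa : τ ≤ d * a ^ 2 := by
    rw [sq_sqrt (by positivity), ← mul_div_assoc, mul_comm _ (2 : ℝ)]
    exact hτ.le_two_mul_div hp
  calc ENNReal.ofReal (exp (-C * n * d))
      ≤ gaussianReal 0 1 (Ici a) ^ (d * n) := by
        simpa [mul_assoc, mul_comm] using hexp (d * n)
    _ = (Measure.pi fun _ : Fin n => stdGaussian d) (univ.pi fun _ => {x | ∀ k, a ≤ x k}) := by
        simp only [Measure.pi_pi, stdGaussian_coord_ge, Finset.prod_const, Finset.card_univ,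
          Fintype.card_fin, pow_mul]
    _ ≤ _ := measure_mono (pi_coord_ge_subset_cliqueSet (sqrt_nonneg _) hτa)

theorem gauss_clique_prob_strong_bias_lower_bound (p : ℝ) (hp : 0 < p) (hp' : p ≤ 1 / 2) :
    ∃ C : ℝ, 0 < C ∧ ∀ n d : ℕ, 2 ≤ n → 2 ≤ d → ∀ τ : ℝ, IsGaussThreshold d p τ →
      ENNReal.ofReal (Real.exp (-C * (n : ℝ) * (d : ℝ))) ≤
        (Measure.pi fun _ : Fin n => stdGaussian d) (cliqueSet n d τ) :=
  gauss_clique_prob_strong_bias_lower_bound_general p hp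

end
end
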